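/- arXiv:2301.06280 — 2 statements merged into one kernel-verified Lean document; each statement's English description precedes it below -/
import Mathlib

section
/- In the setting of the previous lemma with Ỹ = V_p, Z̃ = U_p satisfying V_p^T V_p = U_p^T U_p = (1/2) I_p (so that [V_p; U_p]/normalization is column orthonormal with σ_max({V_p, U_p}) = 1), one has dist(span{Ỹ}, span{Y}) ≤ √2 · dist(span{[Ỹ; Z̃]}, span{[Y; Z]}) and dist(span{Z̃}, span{Z}) ≤ √2 · dist(span{[Ỹ; Z̃]}, span{[Y; Z]}). -/
open Matrix

/-- The spectral (operator 2-)norm of a real matrix. -/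
noncomputable def snorm {m n : Type*} [Fintype m] [Fintype n] [DecidableEq n]
    (A : Matrix m n ℝ) : ℝ :=
  ‖LinearMap.toContinuousLinearMap (Matrix.toEuclideanLin A)‖

/-- The orthogonal projector onto the column space of a full column rank matrix. -/
noncomputable def projMat {m p : Type*} [Fintype m] [Fintype p] [DecidableEq m]
    [DecidableEq p] (B : Matrix m p ℝ) : Matrix m m ℝ :=
  B * (Bᵀ * B)⁻¹ * Bᵀ

/-!
Write `W̃ = [Ỹ; Z̃]`, `W = [Y; Z]` and let `E` be the row selection with `Ỹ = E W̃`,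
`Y = E W`.
Since `(I - P_Y) E W = 0` and `E P_W̃ W̃ = Ỹ`,
`(I - P_Y) P_Ỹ = (I - P_Y) E (P_W̃ - P_W) W̃ (ỸᵀỸ)⁻¹Ỹᵀ`, whose norm is at most
`‖P_W̃ - P_W‖ ‖(ỸᵀỸ)⁻¹Ỹᵀ‖ = √2 ‖P_W̃ - P_W‖`.
It remains to see that `‖P - Q‖ ≤ ‖(I - Q) P‖` for orthogonal projections of equal rank:
`P - Q = (I - Q) P - Q (I - P)` is a sum of two operators with orthogonal ranges, and equality
of ranks forces `‖(I - P) Q‖ ≤ ‖(I - Q) P‖` whenever the latter is `< 1`.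
-/

open Module ContinuousLinearMap
open scoped InnerProductSpace Matrix.Norms.L2Operator

theorem Submodule.map_eq_range_of_disjoint_ker {K V W : Type*} [DivisionRing K]
    [AddCommGroup V] [Module K V] [AddCommGroup W] [Module K W] [FiniteDimensional K W]
    {f : V →ₗ[K] W} {U : Submodule K V} (hU : Disjoint U (LinearMap.ker f))
    (hrank : finrank K U = finrank K (LinearMap.range f)) : U.map f = LinearMap.range f :=
  eq_of_le_of_finrank_eq LinearMap.map_le_range <| by
    rw [← LinearMap.range_domRestrict,
      LinearMap.finrank_range_of_inj (LinearMap.injective_domRestrict_iff.2 hU), hrank]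

lemma IsStarProjection.norm_mul_le_one {A : Type*} [NonUnitalNormedRing A] [StarRing A]
    [CStarRing A] {p q : A} (hp : IsStarProjection p) (hq : IsStarProjection q) :
    ‖p * q‖ ≤ 1 :=
  (norm_mul_le p q).trans (mul_le_one₀ (hp.norm_le p) (norm_nonneg q) (hq.norm_le q))

section Hilbert

variable {E : Type*} [NormedAddCommGroup E] [InnerProductSpace ℝ E] [CompleteSpace E]

lemma ContinuousLinearMap.inner_apply_apply_eq_zero_of_star_mul_eq_zero {A B : E →L[ℝ] E}
    (h : star A * B = 0) (x y : E) : ⟪A x, B y⟫_ℝ = 0 := by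
  rw [← adjoint_inner_right, ← star_eq_adjoint, ← mul_apply_eq_comp, h, _root_.zero_apply,
    inner_zero_right]

namespace IsStarProjection

variable {P Q : E →L[ℝ] E}

lemma inner_apply_left_eq_right (hP : IsStarProjection P) (x y : E) :
    ⟪P x, y⟫_ℝ = ⟪x, P y⟫_ℝ :=
  (IsStarProjection.isSymmetricProjection hP).isSymmetric x y

lemma norm_apply_sq_add_norm_one_sub_apply_sq (hP : IsStarProjection P) (x : E) :
    ‖P x‖ ^ 2 + ‖(1 - P) x‖ ^ 2 = ‖x‖ ^ 2 := by
  have horth : star P * (1 - P) = 0 := by rw [hP.isSelfAdjoint.star_eq, hP.mul_one_sub_self]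
  rw [← add_zero (_ + _), ← mul_zero 2,
    ← inner_apply_apply_eq_zero_of_star_mul_eq_zero horth x x, ← add_right_comm,
    ← norm_add_sq_real, ← _root_.add_apply, add_sub_cancel, one_apply_eq_self]

theorem norm_sub_le_of_norm_one_sub_mul_le (hP : IsStarProjection P) (hQ : IsStarProjection Q)
    {c : ℝ} (hPQ : ‖(1 - Q) * P‖ ≤ c) (hQP : ‖(1 - P) * Q‖ ≤ c) : ‖P - Q‖ ≤ c := by
  have hc : 0 ≤ c := (norm_nonneg _).trans hPQ
  have hQP' : ‖Q * (1 - P)‖ ≤ c := by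
    have hstar : star ((1 - P) * Q) = Q * (1 - P) := by
      rw [star_mul, hQ.isSelfAdjoint.star_eq, hP.one_sub.isSelfAdjoint.star_eq]
    exact hstar ▸ (norm_star _).trans_le hQP
  have horth : star ((1 - Q) * P) * (Q * (1 - P)) = 0 := by
    rw [star_mul, hP.isSelfAdjoint.star_eq, hQ.one_sub.isSelfAdjoint.star_eq, mul_assoc,
      ← mul_assoc (1 - Q), hQ.one_sub_mul_self, zero_mul, mul_zero]
  refine opNorm_le_bound _ hc fun u => le_of_pow_le_pow_left₀ two_ne_zero (by positivity) ?_
  have hsplit : (P - Q) u = ((1 - Q) * P) (P u) - (Q * (1 - P)) ((1 - P) u) := by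
    rw [← mul_apply_eq_comp, ← mul_apply_eq_comp, mul_assoc, hP.isIdempotentElem.eq, mul_assoc,
      hP.one_sub.isIdempotentElem.eq, ← _root_.sub_apply]
    congr 1
    noncomm_ring
  have h₁ : ‖((1 - Q) * P) (P u)‖ ≤ c * ‖P u‖ :=
    (le_opNorm _ _).trans (mul_le_mul_of_nonneg_right hPQ (norm_nonneg _))
  have h₂ : ‖(Q * (1 - P)) ((1 - P) u)‖ ≤ c * ‖(1 - P) u‖ :=
    (le_opNorm _ _).trans (mul_le_mul_of_nonneg_right hQP' (norm_nonneg _))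
  rw [hsplit, norm_sub_sq_real, inner_apply_apply_eq_zero_of_star_mul_eq_zero horth, mul_pow,
    ← hP.norm_apply_sq_add_norm_one_sub_apply_sq u]
  nlinarith [pow_le_pow_left₀ (norm_nonneg _) h₁ 2, pow_le_pow_left₀ (norm_nonneg _) h₂ 2]

lemma mul_norm_sq_le_norm_apply_sq_of_apply_eq_self (hP : IsStarProjection P)
    (hQ : IsStarProjection Q) {k : ℝ} (hk : 0 ≤ k) {x : E} (hx : P x = x)
    (hkx : k * ‖x‖ ^ 2 ≤ ‖Q x‖ ^ 2) : k * ‖Q x‖ ^ 2 ≤ ‖P (Q x)‖ ^ 2 := by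
  have hQQ : Q (Q x) = Q x := by rw [← mul_apply_eq_comp, hQ.isIdempotentElem.eq]
  have hinner : ⟪P (Q x), x⟫_ℝ = ‖Q x‖ ^ 2 := by
    rw [hP.inner_apply_left_eq_right, hx, ← hQQ, hQ.inner_apply_left_eq_right, hQQ,
      real_inner_self_eq_norm_sq]
  have hcs : ‖Q x‖ ^ 2 ≤ ‖P (Q x)‖ * ‖x‖ := hinner ▸ real_inner_le_norm _ _
  rcases (norm_nonneg (Q x)).eq_or_lt with hz | hz
  · rw [← hz]; nlinarith [sq_nonneg ‖P (Q x)‖]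
  have hcs2 : (‖Q x‖ ^ 2) ^ 2 ≤ ‖P (Q x)‖ ^ 2 * ‖x‖ ^ 2 := by
    rw [← mul_pow]; exact pow_le_pow_left₀ (by positivity) hcs 2
  refine le_of_mul_le_mul_right ?_ (pow_pos hz 2)
  nlinarith [mul_le_mul_of_nonneg_left hcs2 hk,
    mul_le_mul_of_nonneg_left hkx (sq_nonneg ‖P (Q x)‖)]

end IsStarProjection

end Hilbert

namespace IsStarProjection

variable {E : Type*} [NormedAddCommGroup E] [InnerProductSpace ℝ E] [FiniteDimensional ℝ E]
  {P Q : E →L[ℝ] E}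

/- `Q` maps `range P` injectively, hence onto `range Q`: every `z ∈ range Q` is `Q x` with
`x ∈ range P`, and `mul_norm_sq_le_norm_apply_sq_of_apply_eq_self` bounds `‖P z‖` from below. -/
theorem norm_one_sub_mul_le_of_finrank_range_eq (hP : IsStarProjection P)
    (hQ : IsStarProjection Q)
    (hrank : finrank ℝ (LinearMap.range (P : E →ₗ[ℝ] E)) =
      finrank ℝ (LinearMap.range (Q : E →ₗ[ℝ] E)))
    (h : ‖(1 - Q) * P‖ < 1) : ‖(1 - P) * Q‖ ≤ ‖(1 - Q) * P‖ := by
  set c := ‖(1 - Q) * P‖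
  have hc : 0 ≤ c := norm_nonneg _
  have hk : 0 < 1 - c ^ 2 := by nlinarith
  have hfix : ∀ x ∈ LinearMap.range (P : E →ₗ[ℝ] E), P x = x := by
    rintro _ ⟨w, rfl⟩
    rw [coe_coe, ← mul_apply_eq_comp, hP.isIdempotentElem.eq]
  have hlower : ∀ x, P x = x → (1 - c ^ 2) * ‖x‖ ^ 2 ≤ ‖Q x‖ ^ 2 := by
    intro x hx
    have hdist : ‖(1 - Q) x‖ ≤ c * ‖x‖ := by
      conv_lhs => rw [← hx, ← mul_apply_eq_comp]
      exact le_opNorm _ _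
    nlinarith [hQ.norm_apply_sq_add_norm_one_sub_apply_sq x,
      pow_le_pow_left₀ (norm_nonneg _) hdist 2]
  have hmap : (LinearMap.range (P : E →ₗ[ℝ] E)).map (Q : E →ₗ[ℝ] E) =
      LinearMap.range (Q : E →ₗ[ℝ] E) := by
    refine Submodule.map_eq_range_of_disjoint_ker (LinearMap.disjoint_ker.2 fun x hx hQx => ?_)
      hrank
    have hx0 := hlower x (hfix x hx)
    rw [← coe_coe, hQx, norm_zero] at hx0
    exact norm_eq_zero.1 <| (pow_eq_zero_iff two_ne_zero).1 <|
      le_antisymm (by nlinarith) (sq_nonneg _)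
  refine opNorm_le_bound _ hc fun y => le_of_pow_le_pow_left₀ two_ne_zero (by positivity) ?_
  obtain ⟨x, hx, hxy⟩ := hmap.ge (LinearMap.mem_range_self _ y)
  have hback := hP.mul_norm_sq_le_norm_apply_sq_of_apply_eq_self hQ hk.le (hfix x hx)
    (hlower x (hfix x hx))
  rw [coe_coe] at hxy
  rw [hxy] at hback
  rw [mul_apply_eq_comp]
  nlinarith [hP.norm_apply_sq_add_norm_one_sub_apply_sq (Q y),
    hQ.norm_apply_sq_add_norm_one_sub_apply_sq y, norm_nonneg ((1 - Q) y)]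

theorem norm_sub_le_norm_one_sub_mul (hP : IsStarProjection P) (hQ : IsStarProjection Q)
    (hrank : finrank ℝ (LinearMap.range (P : E →ₗ[ℝ] E)) =
      finrank ℝ (LinearMap.range (Q : E →ₗ[ℝ] E))) :
    ‖P - Q‖ ≤ ‖(1 - Q) * P‖ := by
  rcases lt_or_ge ‖(1 - Q) * P‖ 1 with h | h
  · exact hP.norm_sub_le_of_norm_one_sub_mul_le hQ le_rfl
      (hP.norm_one_sub_mul_le_of_finrank_range_eq hQ hrank h)
  · exact (hP.norm_sub_le_of_norm_one_sub_mul_le hQ (hQ.one_sub.norm_mul_le_one hP)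
      (hP.one_sub.norm_mul_le_one hQ)).trans h

end IsStarProjection

section projMat

variable {m p : Type*} [Fintype m] [Fintype p] [DecidableEq m] [DecidableEq p]

lemma projMat_eq_mul_transpose {B : Matrix m p ℝ} (hB : Bᵀ * B = 1) : projMat B = B * Bᵀ := by
  rw [projMat, hB, inv_one, Matrix.mul_one]

lemma projMat_mul_self {B : Matrix m p ℝ} (hB : IsUnit (Bᵀ * B)) : projMat B * B = B := by
  rw [projMat, Matrix.mul_assoc, Matrix.mul_assoc, Matrix.nonsing_inv_mul _
    ((isUnit_iff_isUnit_det _).1 hB), Matrix.mul_one]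

lemma isStarProjection_projMat {B : Matrix m p ℝ} (hB : IsUnit (Bᵀ * B)) :
    IsStarProjection (projMat B) where
  isIdempotentElem := by
    have h : projMat B = B * ((Bᵀ * B)⁻¹ * Bᵀ) := Matrix.mul_assoc _ _ _
    rw [IsIdempotentElem]
    nth_rw 2 [h]
    rw [← Matrix.mul_assoc, projMat_mul_self hB, ← h]
  isSelfAdjoint := by
    rw [IsSelfAdjoint, Matrix.star_eq_conjTranspose, conjTranspose_eq_transpose_of_trivial,
      projMat, transpose_mul, transpose_mul, transpose_nonsing_inv, transpose_mul,
      transpose_transpose, Matrix.mul_assoc]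

lemma rank_projMat {B : Matrix m p ℝ} (hB : IsUnit (Bᵀ * B)) :
    (projMat B).rank = Fintype.card p := by
  have hrank : B.rank = Fintype.card p := by
    rw [← rank_transpose_mul_self, rank_of_isUnit _ hB]
  refine le_antisymm ?_ ?_
  · rw [← hrank, projMat, Matrix.mul_assoc]
    exact rank_mul_le_left _ _
  · rw [← hrank]
    conv_lhs => rw [← projMat_mul_self hB]
    exact rank_mul_le_left _ _

end projMat

namespace Matrix

lemma isUnit_transpose_mul_self_of_rank_eq {m p : Type*} [Fintype m] [Fintype p]
    [DecidableEq p] {B : Matrix m p ℝ} (h : B.rank = Fintype.card p) : IsUnit (Bᵀ * B) := by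
  have hrange : LinearMap.range (Bᵀ * B).mulVecLin = ⊤ := by
    refine Submodule.eq_top_of_finrank_eq ?_
    rw [Module.finrank_fintype_fun_eq_card]
    exact (rank_transpose_mul_self B).trans h
  exact mulVec_surjective_iff_isUnit.1 (LinearMap.range_eq_top.1 hrange)

section rank

variable {κ : Type*} [Fintype κ] [DecidableEq κ]

lemma finrank_range_toEuclideanCLM (A : Matrix κ κ ℝ) :
    finrank ℝ (LinearMap.range (toEuclideanCLM (𝕜 := ℝ) A :
      EuclideanSpace ℝ κ →ₗ[ℝ] EuclideanSpace ℝ κ)) = A.rank :=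
  (A.rank_eq_finrank_range_toLin (EuclideanSpace.basisFun κ ℝ).toBasis
    (EuclideanSpace.basisFun κ ℝ).toBasis).symm

theorem l2_opNorm_sub_le_of_rank_eq {P Q : Matrix κ κ ℝ} (hP : IsStarProjection P)
    (hQ : IsStarProjection Q) (hrank : P.rank = Q.rank) : ‖P - Q‖ ≤ ‖(1 - Q) * P‖ := by
  have h := (hP.map (toEuclideanCLM (𝕜 := ℝ))).norm_sub_le_norm_one_sub_mul
    (hQ.map (toEuclideanCLM (𝕜 := ℝ)))
    (by rw [finrank_range_toEuclideanCLM, finrank_range_toEuclideanCLM, hrank])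
  rwa [← map_sub, ← map_one (toEuclideanCLM (𝕜 := ℝ)), ← map_sub, ← map_mul, ← cstar_norm_def,
    ← cstar_norm_def] at h

end rank

section norms

variable {m p : Type*} [Fintype m] [Fintype p] [DecidableEq p]

lemma l2_opNorm_transpose [DecidableEq m] (A : Matrix m p ℝ) : ‖Aᵀ‖ = ‖A‖ := by
  rw [← conjTranspose_eq_transpose_of_trivial, l2_opNorm_conjTranspose]

lemma l2_opNorm_le_sqrt_of_transpose_mul_self_eq_smul {A : Matrix m p ℝ} {t : ℝ} (ht : 0 ≤ t)
    (h : Aᵀ * A = t • 1) : ‖A‖ ≤ √t := by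
  refine Real.le_sqrt_of_sq_le ?_
  rw [sq, ← l2_opNorm_conjTranspose_mul_self, conjTranspose_eq_transpose_of_trivial, h,
    norm_smul, Real.norm_of_nonneg ht]
  exact mul_le_of_le_one_right ht (IsStarProjection.norm_le _ (.one _))

lemma l2_opNorm_inv_mul_transpose_le [DecidableEq m] {A : Matrix m p ℝ} {t : ℝ} (ht : 0 < t)
    (h : Aᵀ * A = t • 1) : ‖(Aᵀ * A)⁻¹ * Aᵀ‖ ≤ (√t)⁻¹ := by
  have hinv : (Aᵀ * A)⁻¹ = t⁻¹ • 1 := by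
    rw [h]
    refine inv_eq_left_inv ?_
    rw [smul_mul_smul_comm, inv_mul_cancel₀ ht.ne', Matrix.one_mul, one_smul]
  rw [hinv, Matrix.smul_mul, Matrix.one_mul, norm_smul, l2_opNorm_transpose,
    Real.norm_of_nonneg (inv_nonneg.2 ht.le)]
  calc t⁻¹ * ‖A‖ ≤ t⁻¹ * √t := by
        gcongr; exact l2_opNorm_le_sqrt_of_transpose_mul_self_eq_smul ht.le h
    _ = (√t)⁻¹ := by
        rw [← Real.sq_sqrt ht.le, Real.sqrt_sq (Real.sqrt_nonneg t), sq, mul_inv,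
          inv_mul_cancel_right₀ (Real.sqrt_pos.2 ht).ne']

end norms

section compression

variable {ι κ π : Type*} [Fintype ι] [Fintype κ] [Fintype π] [DecidableEq ι] [DecidableEq κ]
  [DecidableEq π] {Wt W : Matrix ι π ℝ} {E : Matrix κ ι ℝ} {Xt X : Matrix κ π ℝ}

lemma one_sub_projMat_mul_projMat_eq (hWt : Wtᵀ * Wt = 1) (hW : Wᵀ * W = 1)
    (hX : IsUnit (Xᵀ * X)) (hEWt : E * Wt = Xt) (hEW : E * W = X) :
    (1 - projMat X) * projMat Xt =
      (1 - projMat X) * E * (projMat Wt - projMat W) * Wt * ((Xtᵀ * Xt)⁻¹ * Xtᵀ) := by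
  have hXann : (1 - projMat X) * X = 0 := by
    rw [Matrix.sub_mul, Matrix.one_mul, projMat_mul_self hX, sub_self]
  have hdiff : E * (projMat Wt - projMat W) * Wt = Xt - X * (Wᵀ * Wt) := by
    rw [projMat_eq_mul_transpose hWt, projMat_eq_mul_transpose hW, Matrix.mul_sub,
      Matrix.sub_mul, ← hEWt, ← hEW]
    simp only [Matrix.mul_assoc, hWt, Matrix.mul_one]
  calc (1 - projMat X) * projMat Xt = (1 - projMat X) * Xt * ((Xtᵀ * Xt)⁻¹ * Xtᵀ) := by
        simp only [projMat, Matrix.mul_assoc]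
    _ = (1 - projMat X) * (Xt - X * (Wᵀ * Wt)) * ((Xtᵀ * Xt)⁻¹ * Xtᵀ) := by
        rw [Matrix.mul_sub, ← Matrix.mul_assoc _ X, hXann, Matrix.zero_mul, sub_zero]
    _ = _ := by
        rw [← hdiff]; simp only [Matrix.mul_assoc]

lemma l2_opNorm_one_sub_projMat_mul_projMat_le (hWt : Wtᵀ * Wt = 1) (hW : Wᵀ * W = 1)
    (hE : E * Eᵀ = 1) (hX : IsUnit (Xᵀ * X)) (hEWt : E * Wt = Xt) (hEW : E * W = X) :
    ‖(1 - projMat X) * projMat Xt‖ ≤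
      ‖projMat Wt - projMat W‖ * ‖(Xtᵀ * Xt)⁻¹ * Xtᵀ‖ := by
  have hX1 : ‖1 - projMat X‖ ≤ 1 := (isStarProjection_projMat hX).one_sub.norm_le _
  have hE1 : ‖E‖ ≤ 1 := by
    rw [← l2_opNorm_transpose]
    simpa using l2_opNorm_le_sqrt_of_transpose_mul_self_eq_smul zero_le_one
      (by rwa [transpose_transpose, one_smul])
  have hWt1 : ‖Wt‖ ≤ 1 := by
    simpa using l2_opNorm_le_sqrt_of_transpose_mul_self_eq_smul zero_le_one (by rwa [one_smul])
  rw [one_sub_projMat_mul_projMat_eq hWt hW hX hEWt hEW]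
  set D := projMat Wt - projMat W
  set M := (Xtᵀ * Xt)⁻¹ * Xtᵀ
  calc ‖(1 - projMat X) * E * D * Wt * M‖
      ≤ ‖1 - projMat X‖ * ‖E‖ * ‖D‖ * ‖Wt‖ * ‖M‖ := by
        refine (l2_opNorm_mul _ _).trans (mul_le_mul_of_nonneg_right ?_ (norm_nonneg _))
        refine (l2_opNorm_mul _ _).trans (mul_le_mul_of_nonneg_right ?_ (norm_nonneg _))
        refine (l2_opNorm_mul _ _).trans (mul_le_mul_of_nonneg_right ?_ (norm_nonneg _))
        exact l2_opNorm_mul _ _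
    _ ≤ 1 * 1 * ‖D‖ * 1 * ‖M‖ := by gcongr
    _ = ‖D‖ * ‖M‖ := by ring

theorem l2_opNorm_projMat_sub_le (hWt : Wtᵀ * Wt = 1) (hW : Wᵀ * W = 1) (hE : E * Eᵀ = 1)
    (hEWt : E * Wt = Xt) (hEW : E * W = X) (hXt : IsUnit (Xtᵀ * Xt)) (hX : IsUnit (Xᵀ * X)) :
    ‖projMat Xt - projMat X‖ ≤ ‖projMat Wt - projMat W‖ * ‖(Xtᵀ * Xt)⁻¹ * Xtᵀ‖ :=
  (l2_opNorm_sub_le_of_rank_eq (isStarProjection_projMat hXt) (isStarProjection_projMat hX)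
    (by rw [rank_projMat hXt, rank_projMat hX])).trans
    (l2_opNorm_one_sub_projMat_mul_projMat_le hWt hW hE hX hEWt hEW)

end compression

end Matrix

theorem block_distance_bound_sqrt_two_general
    (m n p : ℕ)
    (Yt Y : Matrix (Fin n) (Fin p) ℝ) (Zt Z : Matrix (Fin m) (Fin p) ℝ)
    (hYt : Ytᵀ * Yt = (1 / 2 : ℝ) • 1) (hZt : Ztᵀ * Zt = (1 / 2 : ℝ) • 1)
    (hY : Y.rank = p) (hZ : Z.rank = p)
    (horth2 : (Matrix.fromRows Y Z)ᵀ * Matrix.fromRows Y Z = 1) :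
    snorm (projMat Yt - projMat Y) ≤
      Real.sqrt 2 * snorm (projMat (Matrix.fromRows Yt Zt) - projMat (Matrix.fromRows Y Z)) ∧
    snorm (projMat Zt - projMat Z) ≤
      Real.sqrt 2 * snorm (projMat (Matrix.fromRows Yt Zt) - projMat (Matrix.fromRows Y Z)) := by
  have hWt : (fromRows Yt Zt)ᵀ * fromRows Yt Zt = 1 := by
    rw [transpose_fromRows, fromCols_mul_fromRows, hYt, hZt, ← add_smul]
    norm_num
  have hblock {k : ℕ} (E : Matrix (Fin k) (Fin n ⊕ Fin m) ℝ) (Xt X : Matrix (Fin k) (Fin p) ℝ)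
      (hE : E * Eᵀ = 1) (hEWt : E * fromRows Yt Zt = Xt) (hEW : E * fromRows Y Z = X)
      (hXt : Xtᵀ * Xt = (1 / 2 : ℝ) • 1) (hX : X.rank = p) :
      ‖projMat Xt - projMat X‖ ≤
        √2 * ‖projMat (fromRows Yt Zt) - projMat (fromRows Y Z)‖ := by
    have hXt_unit : IsUnit (Xtᵀ * Xt) := hXt ▸ (isUnit_iff_isUnit_det _).2 (by simp)
    have hX_unit : IsUnit (Xᵀ * X) :=
      isUnit_transpose_mul_self_of_rank_eq (by rw [hX, Fintype.card_fin])
    rw [mul_comm]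
    refine (l2_opNorm_projMat_sub_le hWt horth2 hE hEWt hEW hXt_unit hX_unit).trans ?_
    gcongr
    simpa using l2_opNorm_inv_mul_transpose_le (by norm_num) hXt
  exact ⟨hblock (fromCols 1 0) Yt Y (by simp [transpose_fromCols, fromCols_mul_fromRows])
      (by simp [fromCols_mul_fromRows]) (by simp [fromCols_mul_fromRows]) hYt hY,
    hblock (fromCols 0 1) Zt Z (by simp [transpose_fromCols, fromCols_mul_fromRows])
      (by simp [fromCols_mul_fromRows]) (by simp [fromCols_mul_fromRows]) hZt hZ⟩

/-- in the special case `Ỹᵀ Ỹ = Z̃ᵀ Z̃ = (1/2) I_p` (so the largest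
generalized singular value of both pairs equals 1), both the upper and lower
subspace distances are bounded by `√2` times the stacked subspace distance. -/
theorem block_distance_bound_sqrt_two
    (m n p : ℕ) (hp : 0 < p) (hpn : p < n) (hpm : p < m)
    (Yt Y : Matrix (Fin n) (Fin p) ℝ) (Zt Z : Matrix (Fin m) (Fin p) ℝ)
    (hYt : Ytᵀ * Yt = (1 / 2 : ℝ) • 1) (hZt : Ztᵀ * Zt = (1 / 2 : ℝ) • 1)
    (hY : Y.rank = p) (hZ : Z.rank = p)
    (horth2 : (Matrix.fromRows Y Z)ᵀ * Matrix.fromRows Y Z = 1) :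
    snorm (projMat Yt - projMat Y) ≤
      Real.sqrt 2 * snorm (projMat (Matrix.fromRows Yt Zt) - projMat (Matrix.fromRows Y Z)) ∧
    snorm (projMat Zt - projMat Z) ≤
      Real.sqrt 2 * snorm (projMat (Matrix.fromRows Yt Zt) - projMat (Matrix.fromRows Y Z)) :=
  block_distance_bound_sqrt_two_general m n p Yt Y Zt Z hYt hZt hY hZ horth2
end

section
/- Let E ∈ ℝ^{(N−p)×p} and M = I_p + E^T E. Then M is symmetric positive definite, M^{-1/2} exists, and ||I_p − M^{-1/2}|| = 1 − 1/√(1 + ||E||²) ≤ ||E||²/(1 + ||E||²), where || · || is the spectral norm. -/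
open Matrix

/-!
With `A = Eᵀ E ≥ 0`, the positive square root of `M = 1 + A` is unique, so it is `R = √(1 + A)`
in the continuous functional calculus of `A`, and `1 - R⁻¹ = g A` for `g x = 1 - 1 / √(1 + x)`.
The functional calculus of real matrices with the spectral norm is isometric, and `g` increases
on `[0, ∞)`, where the spectrum of `A` lies with maximum `‖A‖`; hence `‖1 - R⁻¹‖ = g ‖A‖`, and
`‖A‖ = ‖E‖²`. The bound is `√(1 + s) ≤ 1 + s`.
-/

section IsometricCFC

variable {A : Type*} [NormedRing A] [NormedAlgebra ℝ A] [PartialOrder A] [NonnegSpectrumClass ℝ A]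

lemma sqrt_one_add_pos_of_mem_spectrum {a : A} (ha : 0 ≤ a) {x : ℝ} (hx : x ∈ spectrum ℝ a) :
    0 < √(1 + x) :=
  Real.sqrt_pos.2 (by linarith [spectrum_nonneg_of_nonneg ha hx])

lemma continuousOn_inv_sqrt_one_add {a : A} (ha : 0 ≤ a) :
    ContinuousOn (fun x ↦ (√(1 + x))⁻¹) (spectrum ℝ a) :=
  ContinuousOn.inv₀ (by fun_prop) fun _ hx ↦ (sqrt_one_add_pos_of_mem_spectrum ha hx).ne'

variable [StarRing A] [StarOrderedRing A] [IsometricContinuousFunctionalCalculus ℝ A IsSelfAdjoint]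

open IsometricContinuousFunctionalCalculus in
lemma norm_mem_spectrum_of_nonneg [Nontrivial A] {a : A} (ha : 0 ≤ a) :
    ‖a‖ ∈ spectrum ℝ a := by
  simpa using spectrum.algebraMap_mem ℝ (isGreatest_spectrum a ha).1

open IsometricContinuousFunctionalCalculus in
lemma norm_cfc_of_monotoneOn {f : ℝ → ℝ} {a : A} (hf : MonotoneOn f (Set.Ici 0))
    (hf0 : f 0 = 0) (hfc : ContinuousOn f (spectrum ℝ a) := by cfc_cont_tac)
    (ha : 0 ≤ a := by cfc_tac) : ‖cfc f a‖ = f ‖a‖ := by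
  obtain hA | hA := subsingleton_or_nontrivial A
  · rw [Subsingleton.elim (cfc f a) 0, Subsingleton.elim a 0]
    simp [hf0]
  have hf_nonneg : ∀ ⦃x⦄, 0 ≤ x → 0 ≤ f x := fun x hx ↦ hf0 ▸ hf (Set.mem_Ici.2 le_rfl) hx hx
  refine (IsGreatest.norm_cfc f a).unique
    ⟨⟨‖a‖, norm_mem_spectrum_of_nonneg ha, Real.norm_of_nonneg (hf_nonneg (norm_nonneg a))⟩, ?_⟩
  rintro _ ⟨x, hx, rfl⟩
  have hx0 : 0 ≤ x := spectrum_nonneg_of_nonneg ha hx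
  have hxa : x ≤ ‖a‖ := by simpa [abs_of_nonneg hx0] using norm_spectrum_le a hx
  show ‖f x‖ ≤ f ‖a‖
  rw [Real.norm_of_nonneg (hf_nonneg hx0)]
  exact hf hx0 (norm_nonneg a) hxa

lemma cfc_sqrt_one_add_sq {a : A} (ha : 0 ≤ a) : cfc (fun x ↦ √(1 + x)) a ^ 2 = 1 + a := by
  rw [← cfc_pow .., cfc_congr (g := fun x ↦ 1 + x), cfc_const_add .., cfc_id' ℝ a, map_one]
  intro x hx
  exact Real.sq_sqrt (by linarith [spectrum_nonneg_of_nonneg ha hx])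

lemma eq_cfc_sqrt_one_add {a r : A} (ha : 0 ≤ a) (hr : 0 ≤ r) (h : r * r = 1 + a) :
    r = cfc (fun x ↦ √(1 + x)) a :=
  (CFC.sq_eq_sq_iff r _ hr (cfc_nonneg fun _ _ ↦ Real.sqrt_nonneg _)).mp
    (by rw [sq, h, cfc_sqrt_one_add_sq ha])

lemma one_sub_inverse_cfc_sqrt_one_add {a : A} (ha : 0 ≤ a) :
    1 - Ring.inverse (cfc (fun x ↦ √(1 + x)) a) = cfc (fun x ↦ 1 - (√(1 + x))⁻¹) a := by
  have hcont := continuousOn_inv_sqrt_one_add ha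
  rw [← cfc_inv _ _ fun _ hx ↦ (sqrt_one_add_pos_of_mem_spectrum ha hx).ne', cfc_sub ..,
    cfc_const_one ℝ a]

lemma norm_one_sub_inverse_of_mul_self_eq_one_add {a r : A} (ha : 0 ≤ a) (hr : 0 ≤ r)
    (h : r * r = 1 + a) : ‖1 - Ring.inverse r‖ = 1 - (√(1 + ‖a‖))⁻¹ := by
  rw [eq_cfc_sqrt_one_add ha hr h, one_sub_inverse_cfc_sqrt_one_add ha]
  refine norm_cfc_of_monotoneOn (fun x hx y _ hxy ↦ ?_) (by simp)
    (continuousOn_const.sub (continuousOn_inv_sqrt_one_add ha))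
  have hx : (0 : ℝ) ≤ x := hx
  gcongr

end IsometricCFC

lemma one_sub_inv_sqrt_one_add_le {s : ℝ} (hs : 0 ≤ s) : 1 - (√(1 + s))⁻¹ ≤ s / (1 + s) := by
  have hsqrt : √(1 + s) ≤ 1 + s := Real.sqrt_le_self_iff.2 (Or.inr (by linarith))
  calc 1 - (√(1 + s))⁻¹ ≤ 1 - (1 + s)⁻¹ := by gcongr
    _ = s / (1 + s) := by field_simp; ring

open scoped Matrix.Norms.L2Operator MatrixOrder

lemma snorm_eq_norm {m n : Type*} [Fintype m] [Fintype n] [DecidableEq n] (A : Matrix m n ℝ) :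
    snorm A = ‖A‖ := rfl

lemma norm_transpose_mul_self {m n : Type*} [Fintype m] [Fintype n] [DecidableEq n]
    (A : Matrix m n ℝ) : ‖Aᵀ * A‖ = ‖A‖ ^ 2 := by
  rw [← conjTranspose_eq_transpose_of_trivial, l2_opNorm_conjTranspose_mul_self, sq]

/-- for `E ∈ ℝ^{q×p}` and `M = I + Eᵀ E`, `M` is symmetric positive
definite, its inverse symmetric positive definite square root `M^{-1/2}` exists,
and `‖I − M^{-1/2}‖ = 1 − 1/√(1 + ‖E‖²) ≤ ‖E‖²/(1 + ‖E‖²)`. -/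
theorem inv_sqrt_perturbation
    (p q : ℕ) (E : Matrix (Fin q) (Fin p) ℝ)
    (M : Matrix (Fin p) (Fin p) ℝ) (hM : M = 1 + Eᵀ * E) :
    M.PosDef ∧
    (∃ R : Matrix (Fin p) (Fin p) ℝ, R.PosDef ∧ R * R = M) ∧
    (∀ R : Matrix (Fin p) (Fin p) ℝ, R.PosDef → R * R = M →
      snorm (1 - R⁻¹) = 1 - 1 / Real.sqrt (1 + snorm E ^ 2) ∧
      snorm (1 - R⁻¹) ≤ snorm E ^ 2 / (1 + snorm E ^ 2)) := by
  have hEE : (Eᵀ * E).PosSemidef := by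
    simpa only [conjTranspose_eq_transpose_of_trivial] using posSemidef_conjTranspose_mul_self E
  have hMpd : M.PosDef := hM ▸ PosDef.one.add_posSemidef hEE
  refine ⟨hMpd, ⟨CFC.sqrt M, hMpd.isStrictlyPositive.sqrt.posDef, CFC.sqrt_mul_sqrt_self M⟩,
    fun R hR hRR ↦ ?_⟩
  have hnorm : snorm (1 - R⁻¹) = 1 - (√(1 + snorm E ^ 2))⁻¹ := by
    rw [snorm_eq_norm, snorm_eq_norm, ← norm_transpose_mul_self, nonsing_inv_eq_ringInverse]
    exact norm_one_sub_inverse_of_mul_self_eq_one_add (nonneg_iff_posSemidef.2 hEE)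
      (nonneg_iff_posSemidef.2 hR.posSemidef) (hRR.trans hM)
  exact ⟨by rw [hnorm, one_div], hnorm ▸ one_sub_inv_sqrt_one_add_le (sq_nonneg _)⟩
end
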